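/- For disjoint subsets A, B ⊆ [n], define ψ_{A,B}(f) = Σ_{a∈A,b∈B} [ξ_a·(θ_b ⊙ f) + ξ_b·(θ_a ⊙ f)]. Then ψ_{A⊔B} = ψ_A + ψ_{A,B} + ψ_B, and moreover ψ_{A,B} commutes with every ψ_C and with every ψ_{C,D}. -/

import Mathlib

open Finset

/-- The index set for the `2n` fermionic generators `θ₁,…,θₙ,ξ₁,…,ξₙ`:
`Sum.inl i` is `θ_i`, `Sum.inr i` is `ξ_i`. -/
abbrev Gen (n : ℕ) := Fin n ⊕ Fin n

/-- The position of a generator in the fixed order `θ₁ < ⋯ < θₙ < ξ₁ < ⋯ < ξₙ`. -/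
def gidx {n : ℕ} : Gen n → ℕ
  | .inl i => (i : ℕ)
  | .inr i => n + (i : ℕ)

/-- The exterior algebra `∧{Θ_n, Ξ_n}` over `ℂ`, modeled by coefficient functions
on the basis of monomials `θ_S · ξ_T`, a monomial being indexed by a subset of the
`2n` generators. -/
abbrev ExtA (n : ℕ) := Finset (Gen n) → ℂ

/-- The basis monomial indexed by a set of generators (product taken in the fixed order). -/
noncomputable def emon {n : ℕ} (S : Finset (Gen n)) : ExtA n := fun T => if T = S then 1 else 0

/-- The generator `θ_i`. -/
noncomputable def theta {n : ℕ} (i : Fin n) : ExtA n := emon {Sum.inl i}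

/-- The generator `ξ_i`. -/
noncomputable def xi {n : ℕ} (i : Fin n) : ExtA n := emon {Sum.inr i}

/-- The sign `(-1)^{#inversions}` obtained when concatenating the sorted monomial on `S`
with the sorted monomial on `T` and re-sorting. -/
noncomputable def msign {n : ℕ} (S T : Finset (Gen n)) : ℂ :=
  (-1 : ℂ) ^ (((S ×ˢ T).filter (fun p => gidx p.2 < gidx p.1)).card)

/-- Multiplication in the exterior algebra `∧{Θ_n, Ξ_n}`. -/
noncomputable def emul {n : ℕ} (f g : ExtA n) : ExtA n :=
  fun U => ∑ S ∈ U.powerset, msign S (U \ S) * f S * g (U \ S)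

/-- The inner product on `∧{Θ_n, Ξ_n}` making the monomials `θ_S · ξ_T` orthonormal. -/
noncomputable def einner {n : ℕ} (f g : ExtA n) : ℂ :=
  ∑ S : Finset (Gen n), f S * g S

/-- The contraction (exterior differentiation) action `f ⊙ h`: on generators,
`ω_i ⊙ (ω_{j_1} ⋯ ω_{j_r})` removes `ω_i` with the sign `(-1)^{s-1}` if `j_s = i`
and gives `0` otherwise, extended bilinearly (on a monomial `ω_S`, it is the
composite of the single contractions). -/
noncomputable def odot {n : ℕ} (f h : ExtA n) : ExtA n :=
  fun T => ∑ S : Finset (Gen n), if Disjoint S T then msign S T * f S * h (S ∪ T) else 0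

/-- The sign produced when the permutation `w` reorders the (sorted) monomial on `S`. -/
noncomputable def actsign {n : ℕ} (w : Equiv.Perm (Fin n)) (S : Finset (Gen n)) : ℂ :=
  (-1 : ℂ) ^ (((S ×ˢ S).filter (fun p =>
      gidx p.1 < gidx p.2 ∧
        gidx (Equiv.sumCongr w w p.2) < gidx (Equiv.sumCongr w w p.1))).card)

/-- The diagonal action of a permutation `w ∈ S_n` on `∧{Θ_n, Ξ_n}`:
`w · θ_i = θ_{w(i)}`, `w · ξ_i = ξ_{w(i)}`, extended as an algebra automorphism. -/
noncomputable def pact {n : ℕ} (w : Equiv.Perm (Fin n)) (f : ExtA n) : ExtA n :=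
  fun T =>
    actsign w (T.map (Equiv.sumCongr w w).symm.toEmbedding) *
      f (T.map (Equiv.sumCongr w w).symm.toEmbedding)

/-- The block operator `ρ_B`: for `|B| > 1`, `ρ_B(f) = ∑_{i ≠ j ∈ B} ξ_i · (θ_j ⊙ f)`;
for `B = {i}`, `ρ_B(f) = ξ_i · (θ_i ⊙ f)`. -/
noncomputable def rho {n : ℕ} (B : Finset (Fin n)) (f : ExtA n) : ExtA n :=
  if 1 < B.card then
    ∑ i ∈ B, ∑ j ∈ B.erase i, emul (xi i) (odot (theta j) f)
  else
    ∑ i ∈ B, emul (xi i) (odot (theta i) f)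

/-- The operator `ψ_B`, equal to `ρ_B` when `|B| > 1` and `0` when `|B| ≤ 1`. -/
noncomputable def psi {n : ℕ} (B : Finset (Fin n)) (f : ExtA n) : ExtA n :=
  if 1 < B.card then rho B f else 0

/-- The two-set operator `ψ_{A,B}(f) = ∑_{a ∈ A, b ∈ B} [ξ_a·(θ_b ⊙ f) + ξ_b·(θ_a ⊙ f)]`. -/
noncomputable def psiPair {n : ℕ} (A B : Finset (Fin n)) (f : ExtA n) : ExtA n :=
  ∑ a ∈ A, ∑ b ∈ B, (emul (xi a) (odot (theta b) f) + emul (xi b) (odot (theta a) f))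

/-- A set partition of `[n]` is noncrossing if whenever `a < b < c < d` with `a,c` in a
block `B` and `b,d` in a block `C`, then `B = C`. -/
def Noncrossing {n : ℕ} (π : Finpartition (Finset.univ : Finset (Fin n))) : Prop :=
  ∀ B ∈ π.parts, ∀ C ∈ π.parts, ∀ a b c d : Fin n,
    a < b → b < c → c < d → a ∈ B → c ∈ B → b ∈ C → d ∈ C → B = C

/-- The composite operator `ρ_π = ρ_{B_1} ∘ ⋯ ∘ ρ_{B_k}` over the blocks of `π`
(the order of composition is immaterial since block operators commute). -/
noncomputable def rhoPartition {n : ℕ} (π : Finpartition (Finset.univ : Finset (Fin n))) :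
    ExtA n → ExtA n :=
  π.parts.toList.foldr (fun B g => rho B ∘ g) id

/-- The top monomial `θ_1 θ_2 ⋯ θ_n`. -/
noncomputable def topTheta (n : ℕ) : ExtA n :=
  emon ((Finset.univ : Finset (Fin n)).image Sum.inl)

/-- The fermion `F_π := ρ_π(θ_1 θ_2 ⋯ θ_n)` attached to a set partition `π` of `[n]`. -/
noncomputable def Fperm {n : ℕ} (π : Finpartition (Finset.univ : Finset (Fin n))) : ExtA n :=
  rhoPartition π (topTheta n)

/-- The fermion `f_π := (ξ_1 + ⋯ + ξ_n) ⊙ F_π`. -/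
noncomputable def fperm {n : ℕ} (π : Finpartition (Finset.univ : Finset (Fin n))) : ExtA n :=
  odot (∑ i : Fin n, xi i) (Fperm π)

/-! Left multiplication by `ξ_i` and contraction by `θ_j` are the creation and annihilation
operators of the generators `ξ_i` and `θ_j`. Operators attached to distinct generators
anticommute, because exchanging two distinct generators flips the sign exactly once; hence the
hops `ξ_i · (θ_j ⊙ -)`, each a product of two such operators, all commute with each other, and so
do all sums of hops. Both `ψ_C` and `ψ_{A,B}` are sums of hops, over the off-diagonal of `C × C`
and over `A × B ∪ B × A` respectively, and for disjoint `A`, `B` the off-diagonal of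
`(A ∪ B) × (A ∪ B)` is the disjoint union of those of `A` and `B` with `A × B` and `B × A`. -/

theorem Finset.sum_offDiag {α M : Type*} [DecidableEq α] [AddCommMonoid M] (s : Finset α)
    (g : α × α → M) : ∑ p ∈ s.offDiag, g p = ∑ i ∈ s, ∑ j ∈ s.erase i, g (i, j) := by
  refine sum_finset_product _ _ _ fun p => ?_
  rw [mem_offDiag, mem_erase]
  tauto

theorem Finset.erase_eq_empty_of_card_le_one {α : Type*} [DecidableEq α] {s : Finset α} {a : α}
    (ha : a ∈ s) (hs : #s ≤ 1) : s.erase a = ∅ := by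
  rw [← card_eq_zero, card_erase_of_mem ha]
  omega

theorem commute_mul_mul_of_anticommute {R : Type*} [Ring R] {a b c d : R}
    (hac : a * c = -(c * a)) (hbc : b * c = -(c * b)) (had : a * d = -(d * a))
    (hbd : b * d = -(d * b)) : Commute (a * b) (c * d) :=
  calc a * b * (c * d) = -(a * c * (b * d)) := by rw [mul_assoc, ← mul_assoc b, hbc]; noncomm_ring
    _ = c * a * (b * d) := by rw [hac]; noncomm_ring
    _ = -(c * (a * d) * b) := by rw [hbd]; noncomm_ring
    _ = c * d * (a * b) := by rw [had]; noncomm_ring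

variable {n : ℕ}

theorem gidx_injective : Function.Injective (gidx : Gen n → ℕ) := by
  rintro (i | i) (j | j) h <;> simp only [gidx] at h <;> grind

noncomputable def precSign (x : Gen n) (T : Finset (Gen n)) : ℂ :=
  (-1) ^ #{t ∈ T | gidx t < gidx x}

theorem msign_singleton_left (x : Gen n) (T : Finset (Gen n)) :
    msign {x} T = precSign x T := by
  rw [msign, precSign, singleton_product, filter_map, card_map]
  rfl

theorem precSign_insert {x y : Gen n} {T : Finset (Gen n)} (hy : y ∉ T) :
    precSign x (insert y T) = (if gidx y < gidx x then -1 else 1) * precSign x T := by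
  rw [precSign, precSign, filter_insert]
  split_ifs with h
  · rw [card_insert_of_notMem fun h' => hy (mem_filter.mp h').1, pow_succ, mul_comm]
  · rw [one_mul]

theorem precSign_insert_mul_precSign {x y : Gen n} {T : Finset (Gen n)} (hxy : x ≠ y)
    (hx : x ∉ T) (hy : y ∉ T) :
    precSign x (insert y T) * precSign y T = -(precSign y (insert x T) * precSign x T) := by
  rw [precSign_insert hy, precSign_insert hx]
  rcases (gidx_injective.ne hxy).lt_or_gt with h | h <;> simp [h, h.not_gt] <;> ring

theorem precSign_insert_mul_precSign_insert {x y : Gen n} {T : Finset (Gen n)} (hxy : x ≠ y)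
    (hx : x ∉ T) (hy : y ∉ T) :
    precSign x (insert y T) * precSign y (insert x T) = -(precSign x T * precSign y T) := by
  rw [precSign_insert hy, precSign_insert hx]
  rcases (gidx_injective.ne hxy).lt_or_gt with h | h <;> simp [h, h.not_gt]

noncomputable def creation (x : Gen n) : Module.End ℂ (ExtA n) where
  toFun f U := if x ∈ U then precSign x (U.erase x) * f (U.erase x) else 0
  map_add' f g := by
    funext U
    simp only [Pi.add_apply]
    split_ifs <;> ring
  map_smul' c f := by
    funext U
    simp only [Pi.smul_apply, smul_eq_mul, RingHom.id_apply]
    split_ifs <;> ring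

noncomputable def annihilation (x : Gen n) : Module.End ℂ (ExtA n) where
  toFun f T := if x ∈ T then 0 else precSign x T * f (insert x T)
  map_add' f g := by
    funext T
    simp only [Pi.add_apply]
    split_ifs <;> ring
  map_smul' c f := by
    funext T
    simp only [Pi.smul_apply, smul_eq_mul, RingHom.id_apply]
    split_ifs <;> ring

theorem creation_apply (x : Gen n) (f : ExtA n) (U : Finset (Gen n)) :
    creation x f U = if x ∈ U then precSign x (U.erase x) * f (U.erase x) else 0 := rfl

theorem annihilation_apply (x : Gen n) (f : ExtA n) (T : Finset (Gen n)) :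
    annihilation x f T = if x ∈ T then 0 else precSign x T * f (insert x T) := rfl

theorem emul_emon_singleton (x : Gen n) (g : ExtA n) : emul (emon {x}) g = creation x g := by
  funext U
  rw [emul, creation_apply]
  split_ifs with hx
  · rw [sum_eq_single_of_mem {x} (by simpa using hx)]
    · simp [emon, msign_singleton_left, erase_eq]
    · intro S _ hS
      simp [emon, hS]
  · refine sum_eq_zero fun S hS => ?_
    have : S ≠ {x} := by rintro rfl; exact hx (mem_powerset.mp hS (mem_singleton_self x))
    simp [emon, this]

theorem odot_emon_singleton (x : Gen n) (f : ExtA n) : odot (emon {x}) f = annihilation x f := by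
  funext T
  rw [odot, annihilation_apply, sum_eq_single {x} (fun S _ hS => by simp [emon, hS]) (by simp)]
  by_cases hx : x ∈ T <;> simp [emon, hx, msign_singleton_left]

theorem creation_mul_creation (x y : Gen n) :
    creation x * creation y = -(creation y * creation x) := by
  refine LinearMap.ext fun f => funext fun U => ?_
  simp only [Module.End.mul_apply, LinearMap.neg_apply, Pi.neg_apply, creation_apply]
  obtain rfl | hxy := eq_or_ne x y
  · simp
  by_cases hx : x ∈ U
  · by_cases hy : y ∈ U
    · set W := (U.erase x).erase y with hW
      have hxW : x ∉ W := by simp [W]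
      have hyW : y ∉ W := by simp [W]
      have hUx : U.erase x = insert y W := (insert_erase (mem_erase.mpr ⟨hxy.symm, hy⟩)).symm
      have hUy : U.erase y = insert x W := by
        rw [hW, erase_right_comm]; exact (insert_erase (mem_erase.mpr ⟨hxy, hx⟩)).symm
      simp only [hx, hy, hUx, hUy, mem_insert_self, if_true, erase_insert hxW]
      linear_combination f W * precSign_insert_mul_precSign hxy hxW hyW
    · simp [hx, hy]
  · simp [hx]

theorem annihilation_mul_annihilation (x y : Gen n) :
    annihilation x * annihilation y = -(annihilation y * annihilation x) := by
  refine LinearMap.ext fun f => funext fun T => ?_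
  simp only [Module.End.mul_apply, LinearMap.neg_apply, Pi.neg_apply, annihilation_apply]
  obtain rfl | hxy := eq_or_ne x y
  · simp
  by_cases hx : x ∈ T
  · simp [hx]
  by_cases hy : y ∈ T
  · simp [hy]
  simp only [hx, hy, mem_insert, hxy, hxy.symm, or_self, if_false, insert_comm y x]
  linear_combination f (insert x (insert y T)) * precSign_insert_mul_precSign hxy hx hy

theorem creation_mul_annihilation {x y : Gen n} (hxy : x ≠ y) :
    creation x * annihilation y = -(annihilation y * creation x) := by
  refine LinearMap.ext fun f => funext fun U => ?_
  simp only [Module.End.mul_apply, LinearMap.neg_apply, Pi.neg_apply, creation_apply,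
    annihilation_apply]
  by_cases hx : x ∈ U
  swap
  · simp [hx, hxy]
  obtain ⟨W, hxW, rfl⟩ : ∃ W, x ∉ W ∧ U = insert x W :=
    ⟨U.erase x, notMem_erase x U, (insert_erase hx).symm⟩
  by_cases hy : y ∈ W
  · simp [hy, hxy.symm]
  simp only [mem_insert_self, if_true, erase_insert hxW, hy, mem_insert, hxy.symm, or_self,
    if_false, insert_comm y x, erase_insert (mt mem_insert.mp (not_or.mpr ⟨hxy, hxW⟩))]
  linear_combination f (insert y W) * precSign_insert_mul_precSign_insert hxy hxW hy

noncomputable def hop (i j : Fin n) : Module.End ℂ (ExtA n) :=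
  creation (.inr i) * annihilation (.inl j)

theorem hop_apply (i j : Fin n) (f : ExtA n) : hop i j f = emul (xi i) (odot (theta j) f) := by
  rw [xi, theta, emul_emon_singleton, odot_emon_singleton]
  rfl

theorem commute_hop (i j k l : Fin n) : Commute (hop i j) (hop k l) :=
  commute_mul_mul_of_anticommute (creation_mul_creation _ _)
    (by rw [creation_mul_annihilation Sum.inr_ne_inl, neg_neg])
    (creation_mul_annihilation Sum.inr_ne_inl) (annihilation_mul_annihilation _ _)

noncomputable def hopSum (P : Finset (Fin n × Fin n)) : Module.End ℂ (ExtA n) :=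
  ∑ p ∈ P, hop p.1 p.2

theorem commute_hopSum (P Q : Finset (Fin n × Fin n)) : Commute (hopSum P) (hopSum Q) :=
  .sum_left _ _ _ fun _ _ => .sum_right _ _ _ fun _ _ => commute_hop _ _ _ _

theorem hopSum_apply (P : Finset (Fin n × Fin n)) (f : ExtA n) :
    hopSum P f = ∑ p ∈ P, emul (xi p.1) (odot (theta p.2) f) := by
  simp [hopSum, hop_apply]

theorem psi_eq_hopSum (C : Finset (Fin n)) (f : ExtA n) : psi C f = hopSum C.offDiag f := by
  rw [hopSum_apply, sum_offDiag, psi, rho]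
  split_ifs with hC
  · rfl
  · refine (sum_eq_zero fun i hi => ?_).symm
    rw [erase_eq_empty_of_card_le_one hi (not_lt.mp hC), sum_empty]

theorem psiPair_eq_hopSum (A B : Finset (Fin n)) (f : ExtA n) :
    psiPair A B f = (hopSum (A ×ˢ B) + hopSum (B ×ˢ A)) f := by
  rw [LinearMap.add_apply, hopSum_apply, hopSum_apply, psiPair, sum_product, sum_product_right,
    ← sum_add_distrib]
  exact sum_congr rfl fun a _ => sum_add_distrib

theorem hopSum_union {P Q : Finset (Fin n × Fin n)} (h : Disjoint P Q) :
    hopSum (P ∪ Q) = hopSum P + hopSum Q :=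
  sum_union h

theorem hopSum_offDiag_union {A B : Finset (Fin n)} (hAB : Disjoint A B) :
    hopSum (A ∪ B).offDiag =
      hopSum A.offDiag + (hopSum (A ×ˢ B) + hopSum (B ×ˢ A)) + hopSum B.offDiag := by
  have hAB' := disjoint_left.mp hAB
  rw [offDiag_union hAB, hopSum_union, hopSum_union, hopSum_union]
  · abel
  all_goals
    simp only [disjoint_left, mem_union, mem_offDiag, mem_product]
    grind

/-- For disjoint `A, B`: `ψ_{A⊔B} = ψ_A + ψ_{A,B} + ψ_B`, and `ψ_{A,B}` commutes with
every `ψ_C` and with every `ψ_{C,D}`. -/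
theorem psiPair_decomposition_and_comm (n : ℕ) (A B : Finset (Fin n)) (hAB : Disjoint A B) :
    (∀ f : ExtA n, psi (A ∪ B) f = psi A f + psiPair A B f + psi B f)
    ∧ (∀ (C : Finset (Fin n)) (f : ExtA n), psiPair A B (psi C f) = psi C (psiPair A B f))
    ∧ (∀ (C D : Finset (Fin n)), Disjoint C D →
        ∀ f : ExtA n, psiPair A B (psiPair C D f) = psiPair C D (psiPair A B f)) := by
  have commute_pair (P : Finset (Fin n × Fin n)) :
      Commute (hopSum (A ×ˢ B) + hopSum (B ×ˢ A)) (hopSum P) :=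
    (commute_hopSum _ _).add_left (commute_hopSum _ _)
  refine ⟨fun f => ?_, fun C f => ?_, fun C D _ f => ?_⟩
  · simp only [psi_eq_hopSum, psiPair_eq_hopSum, hopSum_offDiag_union hAB, LinearMap.add_apply]
  · simp only [psi_eq_hopSum, psiPair_eq_hopSum]
    exact LinearMap.congr_fun (commute_pair C.offDiag).eq f
  · simp only [psiPair_eq_hopSum]
    exact LinearMap.congr_fun ((commute_pair _).add_right (commute_pair _)).eq f
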